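/- (Noisy right-hand side only.) Let A ∈ ℝ^{m×n} have every row a_i nonzero, let x_LS ∈ ℝ^n, b := A x_LS, ε ∈ ℝ^m, b̃ := b + ε, p_i := ‖a_i‖²/‖A‖_F², and K_i(x) := x − ((⟨a_i, x⟩ − b̃_i)/‖a_i‖²) a_i. Let σ > 0 satisfy ‖A z‖ ≥ σ‖z‖ for every z ∈ range(Aᵀ), and let x_0 ∈ range(Aᵀ) and x_LS ∈ range(Aᵀ). Then for every k ≥ 0, Σ_{(i_1,…,i_k) ∈ {1,…,m}^k} p_{i_1}⋯p_{i_k} ‖K_{i_k}(⋯K_{i_1}(x_0)⋯) − x_LS‖² ≤ (1 − σ²/‖A‖_F²)^k ‖x_0 − x_LS‖² + ‖ε‖²/σ². -/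

import Mathlib

open Matrix
open scoped RealInnerProductSpace

/-- The `i`-th row of a matrix, viewed as a vector in Euclidean space. -/
noncomputable def row {m n : ℕ} (M : Matrix (Fin m) (Fin n) ℝ) (i : Fin m) :
    EuclideanSpace ℝ (Fin n) :=
  (WithLp.equiv 2 (Fin n → ℝ)).symm (M i)

/-- Matrix-vector multiplication as a map between Euclidean spaces. -/
noncomputable def mulVecE {m n : ℕ} (M : Matrix (Fin m) (Fin n) ℝ)
    (x : EuclideanSpace ℝ (Fin n)) : EuclideanSpace ℝ (Fin m) :=
  Matrix.toEuclideanLin M x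

/-- The Kaczmarz update of `x` for the system `M y = c`, using row `i`:
`x ↦ x - ((⟨mᵢ, x⟩ - cᵢ)/‖mᵢ‖²) mᵢ`. -/
noncomputable def kaczmarz {m n : ℕ} (M : Matrix (Fin m) (Fin n) ℝ) (c : Fin m → ℝ) (i : Fin m)
    (x : EuclideanSpace ℝ (Fin n)) : EuclideanSpace ℝ (Fin n) :=
  x - ((⟪_root_.row M i, x⟫ - c i) / ‖_root_.row M i‖ ^ 2) • _root_.row M i

/-- Iterated Kaczmarz updates along the index sequence `is = (i₁, …, i_k)`,
applying row `i₁` first: `K_{i_k}(⋯ K_{i₁}(x₀) ⋯)`. -/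
noncomputable def kaczmarzIter {m n k : ℕ} (M : Matrix (Fin m) (Fin n) ℝ) (c : Fin m → ℝ)
    (is : Fin k → Fin m) (x0 : EuclideanSpace ℝ (Fin n)) : EuclideanSpace ℝ (Fin n) :=
  (List.ofFn is).foldl (fun x i => kaczmarz M c i x) x0

/-- The squared Frobenius norm `‖M‖_F² = Σ_{i,j} M_{ij}²`. -/
noncomputable def frobSq {m n : ℕ} (M : Matrix (Fin m) (Fin n) ℝ) : ℝ :=
  ∑ i, ∑ j, (M i j) ^ 2

/-- The row space `range(Mᵀ)` of a matrix, as a submodule of Euclidean space. -/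
noncomputable def rowSpace {m n : ℕ} (M : Matrix (Fin m) (Fin n) ℝ) :
    Submodule ℝ (EuclideanSpace ℝ (Fin n)) :=
  LinearMap.range (Matrix.toEuclideanLin Mᵀ)

/-- The spectral norm (operator 2-norm) of a matrix. -/
noncomputable def specNorm {m n : ℕ} (M : Matrix (Fin m) (Fin n) ℝ) : ℝ :=
  ‖LinearMap.toContinuousLinearMap (Matrix.toEuclideanLin M)‖

/-!
Since `b = A x_LS`, the error of one noisy update splits orthogonally:
`‖aᵢ‖² ‖Kᵢ x - x_LS‖² = ‖aᵢ‖² ‖x - x_LS‖² - ⟨aᵢ, x - x_LS⟩² + εᵢ²`.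
Averaging with the weights `pᵢ` and using `‖A e‖ ≥ σ ‖e‖` for `e = x - x_LS`, which stays in
`range(Aᵀ)`, gives `E ‖K x - x_LS‖² ≤ α ‖x - x_LS‖² + ‖ε‖² / ‖A‖_F²` with
`α = 1 - σ² / ‖A‖_F²`. The noise level `‖ε‖² / σ²` is exactly the fixed point of
`t ↦ α t + ‖ε‖² / ‖A‖_F²`, so conditioning on all but the last step propagates the bound
`αᵏ ‖x₀ - x_LS‖² + ‖ε‖² / σ²` by induction on `k`.
-/

theorem List.foldl_mem_of_mapsTo {ι X : Type*} {f : ι → X → X} {S : Set X}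
    (hS : ∀ i, Set.MapsTo (f i) S S) (l : List ι) {x : X} (hx : x ∈ S) :
    l.foldl (fun x i => f i x) x ∈ S := by
  induction l generalizing x with
  | nil => exact hx
  | cons i l ih => exact ih (hS i hx)

theorem List.foldl_ofFn_snoc {ι X : Type*} (f : ι → X → X) {k : ℕ} (t : Fin k → ι) (i : ι) (x : X) :
    (List.ofFn (Fin.snoc t i : Fin (k + 1) → ι)).foldl (fun x i => f i x) x
      = f i ((List.ofFn t).foldl (fun x i => f i x) x) := by
  rw [List.ofFn_succ']
  simp

theorem Fintype.sum_fin_succ_pi_eq_sum_sum_snoc {ι M : Type*} [Fintype ι] [AddCommMonoid M] {k : ℕ}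
    (g : (Fin (k + 1) → ι) → M) :
    ∑ is, g is = ∑ t : Fin k → ι, ∑ i, g (Fin.snoc t i) := by
  rw [← (Fin.snocEquiv fun _ => ι).sum_comp, Fintype.sum_prod_type, Finset.sum_comm]
  rfl

theorem sum_prod_mul_foldl_le_of_drift_le {ι X : Type*} [Fintype ι] {p : ι → ℝ} (hp : ∀ i, 0 ≤ p i)
    (hp1 : ∑ i, p i ≤ 1) {f : ι → X → X} {S : Set X} (hS : ∀ i, Set.MapsTo (f i) S S)
    {V : X → ℝ} {α C D : ℝ} (hα : 0 ≤ α) (hC : 0 ≤ C) (hD : 0 ≤ D) (hCD : α * D + C ≤ D)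
    (hstep : ∀ x ∈ S, ∑ i, p i * V (f i x) ≤ α * V x + C) {x₀ : X} (hx₀ : x₀ ∈ S) (k : ℕ) :
    ∑ is : Fin k → ι, (∏ j, p (is j)) * V ((List.ofFn is).foldl (fun x i => f i x) x₀)
      ≤ α ^ k * V x₀ + D := by
  induction k with
  | zero => simpa using hD
  | succ k ih =>
    set x : (Fin k → ι) → X := fun t => (List.ofFn t).foldl (fun x i => f i x) x₀
    have hxS (t : Fin k → ι) : x t ∈ S := (List.ofFn t).foldl_mem_of_mapsTo hS hx₀
    have hP : ∑ t : Fin k → ι, ∏ j, p (t j) ≤ 1 := by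
      rw [← Fintype.sum_pow]
      exact pow_le_one₀ (Finset.sum_nonneg fun i _ => hp i) hp1
    calc ∑ is : Fin (k + 1) → ι, (∏ j, p (is j)) * V ((List.ofFn is).foldl (fun x i => f i x) x₀)
        = ∑ t : Fin k → ι, (∏ j, p (t j)) * ∑ i, p i * V (f i (x t)) := by
          rw [Fintype.sum_fin_succ_pi_eq_sum_sum_snoc]
          refine Finset.sum_congr rfl fun t _ => ?_
          rw [Finset.mul_sum]
          refine Finset.sum_congr rfl fun i _ => ?_
          rw [Fin.prod_univ_castSucc, List.foldl_ofFn_snoc]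
          simp only [Fin.snoc_castSucc, Fin.snoc_last, x]
          ring
      _ ≤ ∑ t : Fin k → ι, (∏ j, p (t j)) * (α * V (x t) + C) :=
          Finset.sum_le_sum fun t _ => mul_le_mul_of_nonneg_left (hstep _ (hxS t))
            (Finset.prod_nonneg fun j _ => hp _)
      _ = α * ∑ t : Fin k → ι, (∏ j, p (t j)) * V (x t) + C * ∑ t : Fin k → ι, ∏ j, p (t j) := by
          rw [Finset.mul_sum, Finset.mul_sum, ← Finset.sum_add_distrib]
          exact Finset.sum_congr rfl fun t _ => by ring
      _ ≤ α * (α ^ k * V x₀ + D) + C * 1 := by gcongr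
      _ ≤ α ^ (k + 1) * V x₀ + D := by
          have : α * (α ^ k * V x₀) = α ^ (k + 1) * V x₀ := by ring
          linarith

section Kaczmarz

variable {m n : ℕ} (M : Matrix (Fin m) (Fin n) ℝ)

lemma mulVecE_apply (x : EuclideanSpace ℝ (Fin n)) (i : Fin m) :
    mulVecE M x i = ⟪_root_.row M i, x⟫ := by
  simp [mulVecE, Matrix.mulVec, dotProduct, _root_.row,
    PiLp.inner_apply, mul_comm]

lemma norm_mulVecE_sq (x : EuclideanSpace ℝ (Fin n)) :
    ‖mulVecE M x‖ ^ 2 = ∑ i, ⟪_root_.row M i, x⟫ ^ 2 := by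
  simp only [EuclideanSpace.real_norm_sq_eq, mulVecE_apply]

lemma frobSq_eq_sum_norm_row_sq : frobSq M = ∑ i, ‖_root_.row M i‖ ^ 2 := by
  simp [frobSq, EuclideanSpace.real_norm_sq_eq, _root_.row]

lemma frobSq_nonneg : 0 ≤ frobSq M := by
  rw [frobSq_eq_sum_norm_row_sq]
  positivity

lemma norm_mulVecE_sq_le (x : EuclideanSpace ℝ (Fin n)) :
    ‖mulVecE M x‖ ^ 2 ≤ frobSq M * ‖x‖ ^ 2 := by
  rw [norm_mulVecE_sq, frobSq_eq_sum_norm_row_sq, Finset.sum_mul]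
  gcongr with i
  rw [← mul_pow, ← sq_abs]
  gcongr
  exact abs_real_inner_le_norm _ _

lemma row_mem_rowSpace (i : Fin m) : _root_.row M i ∈ rowSpace M := by
  refine ⟨EuclideanSpace.single i 1, PiLp.ext fun j => ?_⟩
  simp [Matrix.mulVec, _root_.row]

lemma kaczmarz_sub_self_mem_rowSpace (c : Fin m → ℝ) (i : Fin m) (x : EuclideanSpace ℝ (Fin n)) :
    kaczmarz M c i x - x ∈ rowSpace M := by
  rw [kaczmarz, sub_sub_cancel_left]
  exact (rowSpace M).neg_mem ((rowSpace M).smul_mem _ (row_mem_rowSpace M i))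

lemma sq_div_frobSq_le_one {σ : ℝ} (hσ : 0 ≤ σ)
    (hσM : ∀ z ∈ rowSpace M, σ * ‖z‖ ≤ ‖mulVecE M z‖) : σ ^ 2 / frobSq M ≤ 1 := by
  rcases (frobSq_nonneg M).eq_or_lt with hF | hF
  · simp [← hF]
  obtain ⟨i, hi⟩ : ∃ i, _root_.row M i ≠ 0 := by
    by_contra! h
    simp [frobSq_eq_sum_norm_row_sq, h] at hF
  have hpos : 0 < ‖_root_.row M i‖ ^ 2 := by positivity
  refine div_le_one_of_le₀ (le_of_mul_le_mul_right ?_ hpos) hF.le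
  calc σ ^ 2 * ‖_root_.row M i‖ ^ 2 = (σ * ‖_root_.row M i‖) ^ 2 := by ring
    _ ≤ ‖mulVecE M (_root_.row M i)‖ ^ 2 := by gcongr; exact hσM _ (row_mem_rowSpace M i)
    _ ≤ frobSq M * ‖_root_.row M i‖ ^ 2 := norm_mulVecE_sq_le M _

lemma norm_row_sq_mul_norm_kaczmarz_sub_sq (y : EuclideanSpace ℝ (Fin n))
    (ε : EuclideanSpace ℝ (Fin m)) {i : Fin m} (hi : _root_.row M i ≠ 0)
    (x : EuclideanSpace ℝ (Fin n)) :
    ‖_root_.row M i‖ ^ 2 * ‖kaczmarz M (fun j => mulVecE M y j + ε j) i x - y‖ ^ 2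
      = ‖_root_.row M i‖ ^ 2 * ‖x - y‖ ^ 2 - ⟪_root_.row M i, x - y⟫ ^ 2 + ε i ^ 2 := by
  set a := _root_.row M i
  have ha : ‖a‖ ^ 2 ≠ 0 := by positivity
  have hK : kaczmarz M (fun j => mulVecE M y j + ε j) i x - y
      = (x - y) - ((⟪a, x - y⟫ - ε i) / ‖a‖ ^ 2) • a := by
    rw [kaczmarz, mulVecE_apply, inner_sub_right, sub_right_comm, sub_add_eq_sub_sub]
  rw [hK, norm_sub_sq_real, real_inner_smul_right, norm_smul, mul_pow, Real.norm_eq_abs, sq_abs,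
    real_inner_comm]
  field_simp
  ring

lemma sum_norm_row_sq_mul_norm_kaczmarz_sub_sq (hrow : ∀ i, _root_.row M i ≠ 0)
    (y : EuclideanSpace ℝ (Fin n)) (ε : EuclideanSpace ℝ (Fin m)) (x : EuclideanSpace ℝ (Fin n)) :
    ∑ i, ‖_root_.row M i‖ ^ 2 * ‖kaczmarz M (fun j => mulVecE M y j + ε j) i x - y‖ ^ 2
      = frobSq M * ‖x - y‖ ^ 2 - ‖mulVecE M (x - y)‖ ^ 2 + ‖ε‖ ^ 2 := by
  simp only [norm_row_sq_mul_norm_kaczmarz_sub_sq M y ε (hrow _), Finset.sum_add_distrib,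
    Finset.sum_sub_distrib, ← Finset.sum_mul, frobSq_eq_sum_norm_row_sq, norm_mulVecE_sq,
    EuclideanSpace.real_norm_sq_eq ε]

-- Not `= 1`: for `m = 0` the Frobenius norm vanishes and every weight is `0 / 0 = 0`.
lemma sum_sq_norm_row_div_frobSq_le_one : ∑ i, ‖_root_.row M i‖ ^ 2 / frobSq M ≤ 1 := by
  rw [← Finset.sum_div, ← frobSq_eq_sum_norm_row_sq]
  exact div_self_le_one _

lemma sum_mul_norm_kaczmarz_sub_sq_le (hrow : ∀ i, _root_.row M i ≠ 0)
    (y : EuclideanSpace ℝ (Fin n)) (ε : EuclideanSpace ℝ (Fin m)) {σ : ℝ} (hσ : 0 ≤ σ)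
    {x : EuclideanSpace ℝ (Fin n)} (hx : σ * ‖x - y‖ ≤ ‖mulVecE M (x - y)‖) :
    ∑ i, ‖_root_.row M i‖ ^ 2 / frobSq M * ‖kaczmarz M (fun j => mulVecE M y j + ε j) i x - y‖ ^ 2
      ≤ (1 - σ ^ 2 / frobSq M) * ‖x - y‖ ^ 2 + ‖ε‖ ^ 2 / frobSq M := by
  simp_rw [div_mul_eq_mul_div]
  calc ∑ i, ‖_root_.row M i‖ ^ 2 * ‖kaczmarz M (fun j => mulVecE M y j + ε j) i x - y‖ ^ 2 / frobSq M
      = (frobSq M * ‖x - y‖ ^ 2 - ‖mulVecE M (x - y)‖ ^ 2 + ‖ε‖ ^ 2) / frobSq M := by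
        rw [← Finset.sum_div, sum_norm_row_sq_mul_norm_kaczmarz_sub_sq M hrow]
    _ ≤ (frobSq M * ‖x - y‖ ^ 2 - (σ * ‖x - y‖) ^ 2 + ‖ε‖ ^ 2) / frobSq M := by
        gcongr
        exact frobSq_nonneg M
    _ = frobSq M / frobSq M * ‖x - y‖ ^ 2 - σ ^ 2 / frobSq M * ‖x - y‖ ^ 2 + ‖ε‖ ^ 2 / frobSq M := by
        ring
    _ ≤ (1 - σ ^ 2 / frobSq M) * ‖x - y‖ ^ 2 + ‖ε‖ ^ 2 / frobSq M := by
        linarith [mul_le_mul_of_nonneg_right (div_self_le_one (frobSq M)) (sq_nonneg ‖x - y‖)]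

end Kaczmarz

/-- Randomized Kaczmarz with noise only in the right-hand side: `A x ≈ b + ε`
where `A x_LS = b` and `x_LS ∈ range(Aᵀ)` (so `x_LS = A†b`). The left-hand side
is the expectation `E‖x_k - x_LS‖²`; this is the Zouzias–Freris bound. -/
theorem rk_noisy_rhs {m n : ℕ}
    (A : Matrix (Fin m) (Fin n) ℝ)
    (hrow : ∀ i, _root_.row A i ≠ 0)
    (xLS : EuclideanSpace ℝ (Fin n)) (hxLS : xLS ∈ rowSpace A)
    (ε : EuclideanSpace ℝ (Fin m))
    (σ : ℝ) (hσ : 0 < σ)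
    (hσA : ∀ z ∈ rowSpace A, σ * ‖z‖ ≤ ‖mulVecE A z‖)
    (x0 : EuclideanSpace ℝ (Fin n)) (hx0 : x0 ∈ rowSpace A)
    (k : ℕ) :
    ∑ is : Fin k → Fin m,
        (∏ j, ‖_root_.row A (is j)‖ ^ 2 / frobSq A) *
          ‖kaczmarzIter A (fun j => mulVecE A xLS j + ε j) is x0 - xLS‖ ^ 2
      ≤ (1 - σ ^ 2 / frobSq A) ^ k * ‖x0 - xLS‖ ^ 2 + ‖ε‖ ^ 2 / σ ^ 2 := by
  have hrate : 0 ≤ 1 - σ ^ 2 / frobSq A := sub_nonneg.2 (sq_div_frobSq_le_one A hσ.le hσA)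
  have hnoise : (1 - σ ^ 2 / frobSq A) * (‖ε‖ ^ 2 / σ ^ 2) + ‖ε‖ ^ 2 / frobSq A
      = ‖ε‖ ^ 2 / σ ^ 2 := by
    have hcancel : σ ^ 2 / frobSq A * (‖ε‖ ^ 2 / σ ^ 2) = ‖ε‖ ^ 2 / frobSq A := by
      rw [div_mul_div_comm, mul_comm, mul_div_mul_right _ _ (pow_ne_zero 2 hσ.ne')]
    linarith
  have hF := frobSq_nonneg A
  exact sum_prod_mul_foldl_le_of_drift_le (fun i => by positivity) (sum_sq_norm_row_div_frobSq_le_one A)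
    (f := kaczmarz A (fun j => mulVecE A xLS j + ε j)) (S := {x | x - xLS ∈ rowSpace A})
    (fun i x hx => by
      simpa only [Set.mem_ofPred_eq, sub_add_sub_cancel] using
        (rowSpace A).add_mem (kaczmarz_sub_self_mem_rowSpace A _ i x) hx)
    (V := fun x => ‖x - xLS‖ ^ 2) hrate (by positivity) (by positivity) hnoise.le
    (fun x hx => sum_mul_norm_kaczmarz_sub_sq_le A hrow xLS ε hσ.le (hσA _ hx))
    ((rowSpace A).sub_mem hx0 hxLS) k
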